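/- arXiv:1507.05548 — 2 statements merged into one kernel-verified Lean document; each statement's English description precedes it below -/
import Mathlib

section
/- (Plünnecke–Ruzsa inequality, multiplicative form) Let Y, X₁, …, X_k be finite nonempty subsets of an abelian group written multiplicatively. Then |X₁ X₂ ⋯ X_k| ≤ (∏_{i=1}^k |Y X_i|) / |Y|^{k−1}. -/
/-!
Ruzsa's product trick followed by the tensor-power trick. In `G^(n+1)` put `A = Y^(n+1)` and let
`C` be the union of the `n + 1` cyclic shifts of the box `X₀ × ⋯ × Xₙ`. The product of the shifts
is the diagonal box `(X₀ ⋯ Xₙ)^(n+1)`, so it lies in `C^(n+1)`, while `|A C|` is at most `n + 1`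
times `∏ |Y Xᵢ|`. The single-set Plünnecke–Ruzsa inequality `|C^(n+1)| |A|^n ≤ |A C|^(n+1)`
therefore yields the theorem up to a factor `n + 1`. Applying this to the boxes `Y^N` and
`Xᵢ^N` in `G^N` and letting `N → ∞` removes the factor.
-/

open Pointwise Finset Fintype

theorem Nat.le_of_forall_pow_le_mul_pow {a b c : ℕ} (h : ∀ n, a ^ n ≤ c * b ^ n) : a ≤ b := by
  by_contra! hba
  obtain rfl | hb := b.eq_zero_or_pos
  · simpa [hba.ne'] using h 1
  have hb' : (0 : ℚ) < b := by exact_mod_cast hb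
  obtain ⟨n, hn⟩ := pow_unbounded_of_one_lt (c : ℚ)
    ((one_lt_div hb').2 (by exact_mod_cast hba) : 1 < (a / b : ℚ))
  rw [div_pow, lt_div_iff₀ (by positivity)] at hn
  exact (h n).not_gt (by exact_mod_cast hn)

lemma Fintype.piFinset_prod {ι κ : Type*} {α : ι → Type*} [Fintype ι] [DecidableEq ι]
    [∀ i, DecidableEq (α i)] [∀ i, CommMonoid (α i)] (s : Finset κ) (f : κ → ∀ i, Finset (α i)) :
    piFinset (fun i ↦ ∏ j ∈ s, f j i) = ∏ j ∈ s, piFinset (f j) := by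
  let φ : (∀ i, Finset (α i)) →* Finset (∀ i, α i) :=
    { toFun := piFinset
      map_one' := piFinset_singleton 1
      map_mul' := fun _ _ ↦ piFinset_mul _ _ }
  rw [← Finset.prod_fn]
  exact map_prod φ f s

lemma Finset.mul_biUnion {α ι : Type*} [DecidableEq α] [Mul α] (A : Finset α) (s : Finset ι)
    (B : ι → Finset α) : A * s.biUnion B = s.biUnion (A * B ·) := by
  ext x
  simp only [mem_mul, mem_biUnion]
  grind

namespace Finset

variable {G : Type*} [CommGroup G] [DecidableEq G]

lemma card_pow_succ_mul_card_pow_le {A : Finset G} (hA : A.Nonempty) (B : Finset G) (n : ℕ) :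
    #(B ^ (n + 1)) * #A ^ n ≤ #(A * B) ^ (n + 1) := by
  have := pluennecke_ruzsa_inequality_pow_mul hA B (n + 1)
  rw [div_pow, div_mul_eq_mul_div, le_div_iff₀ (by positivity), pow_succ' (#A : ℚ≥0),
    ← mul_assoc, mul_right_comm, mul_le_mul_iff_left₀ (by positivity)] at this
  exact_mod_cast this

lemma card_prod_mul_card_pow_le_succ_mul_prod_card_mul (n : ℕ) {Y : Finset G} (hY : Y.Nonempty)
    (X : Fin (n + 1) → Finset G) :
    #(∏ i, X i) * #Y ^ n ≤ (n + 1) * ∏ i, #(Y * X i) := by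
  set A : Finset (Fin (n + 1) → G) := piFinset fun _ ↦ Y
  set B : Fin (n + 1) → Finset (Fin (n + 1) → G) := fun j ↦ piFinset fun i ↦ X (i + j)
  set C := univ.biUnion B
  have hdiag : piFinset (fun _ ↦ ∏ i, X i) ⊆ C ^ (n + 1) :=
    calc piFinset (fun _ ↦ ∏ i, X i)
        = piFinset (fun i ↦ ∏ j, X (i + j)) := by
          congr! 2 with i; exact (Equiv.prod_comp (Equiv.addLeft i) X).symm
      _ = ∏ j, B j := piFinset_prod _ _
      _ ≤ C ^ (n + 1) := by
          simpa using prod_le_pow_card univ B C fun j _ ↦ subset_biUnion_of_mem B (mem_univ j)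
  have hAC : #(A * C) ≤ (n + 1) * ∏ i, #(Y * X i) := by
    rw [mul_biUnion]
    refine (card_biUnion_le_card_mul _ _ (∏ i, #(Y * X i)) fun j _ ↦ ?_).trans (by simp)
    rw [← piFinset_mul, card_piFinset]
    exact (Equiv.prod_comp (Equiv.addRight j) fun i ↦ #(Y * X i)).le
  refine (Nat.pow_le_pow_iff_left n.succ_ne_zero).1 ?_
  calc (#(∏ i, X i) * #Y ^ n) ^ (n + 1)
      = #(piFinset fun _ : Fin (n + 1) ↦ ∏ i, X i) * #A ^ n := by
        simp only [A, card_piFinset_const]; ring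
    _ ≤ #(C ^ (n + 1)) * #A ^ n := by gcongr
    _ ≤ #(A * C) ^ (n + 1) := card_pow_succ_mul_card_pow_le hY.piFinset_const C n
    _ ≤ ((n + 1) * ∏ i, #(Y * X i)) ^ (n + 1) := by gcongr

end Finset

theorem plunnecke_ruzsa_mul_general {G : Type*} [CommGroup G] [DecidableEq G] (k : ℕ)
    (Y : Finset G) (X : Fin k → Finset G) (hY : Y.Nonempty) :
    (∏ i, X i).card * Y.card ^ (k - 1) ≤ ∏ i, (Y * X i).card := by
  obtain _ | n := k
  · simp
  refine Nat.le_of_forall_pow_le_mul_pow (c := n + 1) fun N ↦ ?_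
  have h := card_prod_mul_card_pow_le_succ_mul_prod_card_mul n
    (hY.piFinset_const (ι := Fin N)) fun i ↦ piFinset fun _ ↦ X i
  simp only [← piFinset_prod, ← piFinset_mul, card_piFinset_const] at h
  simpa [mul_pow, prod_pow, pow_right_comm] using h

/-- Plünnecke–Ruzsa inequality (multiplicative form):
`|X₁⋯X_k| · |Y|^(k-1) ≤ ∏ᵢ |Y Xᵢ|`. -/
theorem plunnecke_ruzsa_mul {G : Type*} [CommGroup G] [DecidableEq G] (k : ℕ)
    (Y : Finset G) (X : Fin k → Finset G) (hY : Y.Nonempty) (hX : ∀ i, (X i).Nonempty) :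
    (∏ i, X i).card * Y.card ^ (k - 1) ≤ ∏ i, (Y * X i).card :=
  plunnecke_ruzsa_mul_general k Y X hY
end

section
/- (Konyagin-type bound) Let G be a multiplicative subgroup of 𝔽_q^* and let ψ be a nontrivial additive character of 𝔽_q. Then |Σ_{g ∈ G} ψ(g)| ≤ q^{1/8} · E(G)^{1/4}, where E(G) is the additive energy of G. -/
/-!
Let `r(x)` count the representations `x = a + b` with `a, b ∈ G`, so that `S² = ∑ₓ r(x) ψ(x)` for
`S = ∑_{g ∈ G} ψ(g)`. A finite multiplicatively closed set without `0` satisfies `gG = G` for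
`g ∈ G`, so `r` is invariant under `x ↦ gx`; averaging over `g` gives `|G| S² = ∑ₓ r(x) T(x)` with
`T(x) = ∑_{g ∈ G} ψ(xg)`. Hölder's inequality (two Cauchy–Schwarz steps) together with
`∑ r = |G|²`, `∑ r² = E(G)` and, by orthogonality of characters, `∑ |T|⁴ = q E(G)`, yields
`|S|⁸ ≤ q E(G)²`.
-/

open Pointwise

/-- The additive energy `E(X,Y)`. -/
def addEnergy {G : Type*} [AddCommGroup G] [DecidableEq G] (X Y : Finset G) : ℕ :=
  ((X ×ˢ Y ×ˢ X ×ˢ Y).filter fun t => t.1 + t.2.1 = t.2.2.1 + t.2.2.2).card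

open scoped Finset ComplexConjugate

lemma addEnergy_eq_finsetAddEnergy {α : Type*} [AddCommGroup α] [DecidableEq α]
    (X Y : Finset α) : addEnergy X Y = Finset.addEnergy X Y := by
  rw [Finset.addEnergy_eq_card_filter]
  exact Finset.card_equiv (Equiv.prodAssoc _ _ _).symm (by simp [and_assoc])

namespace Finset

section AddGroup

variable {α : Type*} [AddGroup α] [DecidableEq α]

lemma sum_addConvolution [Fintype α] (A B : Finset α) :
    ∑ x, A.addConvolution B x = #A * #B :=
  (card_product A B ▸ card_eq_sum_card_fiberwise fun _ _ => mem_univ _).symm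

lemma addConvolution_image_apply {β : Type*} [AddGroup β] [DecidableEq β] {φ : α →+ β}
    (hφ : Function.Injective φ) (A B : Finset α) (x : α) :
    (A.image φ).addConvolution (B.image φ) (φ x) = A.addConvolution B x := by
  refine (card_nbij (Prod.map φ φ) ?_ (hφ.prodMap hφ).injOn ?_).symm
  · rintro ⟨a, b⟩ hab
    simp only [coe_filter, mem_product, Set.mem_ofPred_eq] at hab ⊢
    exact ⟨⟨mem_image_of_mem _ hab.1.1, mem_image_of_mem _ hab.1.2⟩, by simp [← hab.2]⟩
  · rintro ⟨_, _⟩ hab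
    simp only [coe_filter, mem_product, mem_image, Set.mem_ofPred_eq] at hab
    obtain ⟨⟨⟨a, ha, rfl⟩, ⟨b, hb, rfl⟩⟩, hab⟩ := hab
    rw [← map_add] at hab
    exact ⟨(a, b), by simp [ha, hb, hφ hab], rfl⟩

end AddGroup

lemma image_mul_left_eq_self {M : Type*} [MulZeroClass M] [IsLeftCancelMulZero M] [DecidableEq M]
    {S : Finset M} (h0 : 0 ∉ S) (hmul : ∀ x ∈ S, ∀ y ∈ S, x * y ∈ S) {t : M} (ht : t ∈ S) :
    S.image (t * ·) = S :=
  eq_of_subset_of_card_le (image_subset_iff.2 fun x hx => hmul t ht x hx)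
    (card_image_of_injective _ (mul_right_injective₀ (ne_of_mem_of_not_mem ht h0))).ge

lemma addConvolution_self_mul_left {R : Type*} [Ring R] [IsLeftCancelMulZero R] [DecidableEq R]
    {S : Finset R} (h0 : 0 ∉ S) (hmul : ∀ x ∈ S, ∀ y ∈ S, x * y ∈ S) {t : R} (ht : t ∈ S)
    (x : R) : S.addConvolution S (t * x) = S.addConvolution S x := by
  simpa only [AddMonoidHom.coe_mulLeft, image_mul_left_eq_self h0 hmul ht] using
    addConvolution_image_apply (φ := AddMonoidHom.mulLeft t)
      (mul_right_injective₀ (ne_of_mem_of_not_mem ht h0)) S S x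

end Finset

lemma sum_addConvolution_self_sq {α : Type*} [AddCommGroup α] [Fintype α] [DecidableEq α]
    (A : Finset α) : ∑ x, A.addConvolution A x ^ 2 = addEnergy A A := by
  rw [addEnergy_eq_finsetAddEnergy, Finset.addEnergy_eq_sum_sq]
  rfl

lemma sum_mul_pow_four_le {ι : Type*} (s : Finset ι) {r : ι → ℝ} (hr : ∀ i ∈ s, 0 ≤ r i)
    (t : ι → ℝ) :
    (∑ i ∈ s, r i * t i) ^ 4 ≤ (∑ i ∈ s, r i) ^ 2 * (∑ i ∈ s, r i ^ 2) * ∑ i ∈ s, t i ^ 4 := by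
  have h1 : (∑ i ∈ s, r i * t i) ^ 2 ≤ (∑ i ∈ s, r i) * ∑ i ∈ s, r i * t i ^ 2 :=
    Finset.sum_sq_le_sum_mul_sum_of_sq_le_mul _ hr
      (fun i hi => mul_nonneg (hr i hi) (sq_nonneg _)) fun i _ => (by ring : _ = _).le
  have h2 := Finset.sum_mul_sq_le_sq_mul_sq s r fun i => t i ^ 2
  calc (∑ i ∈ s, r i * t i) ^ 4 = ((∑ i ∈ s, r i * t i) ^ 2) ^ 2 := by ring
    _ ≤ (∑ i ∈ s, r i) ^ 2 * (∑ i ∈ s, r i * t i ^ 2) ^ 2 := by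
      rw [← mul_pow]
      exact pow_le_pow_left₀ (sq_nonneg _) h1 2
    _ ≤ (∑ i ∈ s, r i) ^ 2 * ((∑ i ∈ s, r i ^ 2) * ∑ i ∈ s, (t i ^ 2) ^ 2) := by gcongr
    _ = _ := by norm_num [← pow_mul, mul_assoc]

lemma sq_sum_addChar_eq_sum_addConvolution_mul {α R : Type*} [AddCommGroup α] [Fintype α]
    [DecidableEq α] [CommRing R] (ψ : AddChar α R) (A : Finset α) :
    (∑ a ∈ A, ψ a) ^ 2 = ∑ x, (A.addConvolution A x : R) * ψ x := by
  rw [sq, Finset.sum_mul_sum, ← Finset.sum_product',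
    ← Finset.sum_fiberwise_of_maps_to (g := fun p : α × α => p.1 + p.2) (t := Finset.univ)
      (fun _ _ => Finset.mem_univ _)]
  refine Finset.sum_congr rfl fun x _ => ?_
  rw [Finset.sum_congr rfl fun p hp => by rw [← ψ.map_add_eq_mul, (Finset.mem_filter.1 hp).2],
    Finset.sum_const, nsmul_eq_mul]
  rfl

section PrimitiveChar

variable {R : Type*} [CommRing R] [Fintype R] [DecidableEq R] {ψ : AddChar R ℂ}

lemma sum_norm_sq_sum_mul_addChar_mul (hψ : ψ.IsPrimitive) (f : R → ℂ) :
    ∑ a, ‖∑ x, f x * ψ (a * x)‖ ^ 2 = Fintype.card R * ∑ x, ‖f x‖ ^ 2 := by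
  apply Complex.ofReal_injective
  push_cast
  simp_rw [← Complex.mul_conj']
  calc ∑ a, (∑ x, f x * ψ (a * x)) * conj (∑ y, f y * ψ (a * y))
      = ∑ x, ∑ y, f x * conj (f y) * ∑ a, ψ (a * (x - y)) := by
        simp_rw [map_sum, map_mul, ← AddChar.map_neg_eq_conj, Finset.sum_mul_sum, Finset.mul_sum]
        rw [Finset.sum_comm]
        refine Finset.sum_congr rfl fun x _ => ?_
        rw [Finset.sum_comm]
        refine Finset.sum_congr rfl fun y _ => Finset.sum_congr rfl fun a _ => ?_
        rw [mul_sub, sub_eq_add_neg, ψ.map_add_eq_mul, ← mul_neg]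
        ring
    _ = Fintype.card R * ∑ x, f x * conj (f x) := by
        simp_rw [AddChar.sum_mulShift _ hψ, sub_eq_zero]
        simp [Finset.mul_sum, mul_comm]

lemma sum_norm_pow_four_sum_addChar_mul (hψ : ψ.IsPrimitive) (A : Finset R) :
    ∑ a, ‖∑ g ∈ A, ψ (a * g)‖ ^ 4 = Fintype.card R * (addEnergy A A : ℝ) := by
  have hsq (a : R) : ‖∑ g ∈ A, ψ (a * g)‖ ^ 4 =
      ‖∑ x, (A.addConvolution A x : ℂ) * ψ (a * x)‖ ^ 2 := by
    have h := sq_sum_addChar_eq_sum_addConvolution_mul (ψ.mulShift a) A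
    simp only [AddChar.mulShift_apply] at h
    rw [← h, norm_pow, ← pow_mul]
  simp_rw [hsq, sum_norm_sq_sum_mul_addChar_mul hψ, Complex.norm_natCast,
    ← sum_addConvolution_self_sq]
  push_cast
  rfl

end PrimitiveChar

lemma card_mul_sq_sum_addChar {F R : Type*} [Field F] [Fintype F] [DecidableEq F] [CommRing R]
    {G : Finset F} (h0 : 0 ∉ G) (hmul : ∀ x ∈ G, ∀ y ∈ G, x * y ∈ G) (ψ : AddChar F R) :
    #G * (∑ g ∈ G, ψ g) ^ 2 = ∑ x, (G.addConvolution G x : R) * ∑ g ∈ G, ψ (x * g) := by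
  have hshift : ∀ g ∈ G, ∑ x, (G.addConvolution G x : R) * ψ (x * g) = (∑ g ∈ G, ψ g) ^ 2 := by
    intro g hg
    rw [sq_sum_addChar_eq_sum_addConvolution_mul,
      ← Equiv.sum_comp (Equiv.mulRight₀ g (ne_of_mem_of_not_mem hg h0))
        (fun x => (G.addConvolution G x : R) * ψ x)]
    refine Fintype.sum_congr _ _ fun x => ?_
    simp [mul_comm x g, Finset.addConvolution_self_mul_left h0 hmul hg]
  simp_rw [Finset.mul_sum]
  rw [Finset.sum_comm, Finset.sum_congr rfl hshift, Finset.sum_const, nsmul_eq_mul]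

theorem norm_sum_addChar_pow_eight_le {F : Type*} [Field F] [Fintype F] [DecidableEq F]
    {G : Finset F} (h0 : 0 ∉ G) (hmul : ∀ x ∈ G, ∀ y ∈ G, x * y ∈ G) {ψ : AddChar F ℂ}
    (hψ : ψ ≠ 1) : ‖∑ g ∈ G, ψ g‖ ^ 8 ≤ Fintype.card F * (addEnergy G G : ℝ) ^ 2 := by
  obtain rfl | hG := G.eq_empty_or_nonempty
  · rw [Finset.sum_empty, norm_zero, zero_pow (by norm_num)]
    positivity
  set S := ∑ g ∈ G, ψ g
  set r : F → ℝ := fun x => G.addConvolution G x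
  set T : F → ℝ := fun x => ‖∑ g ∈ G, ψ (x * g)‖
  have hS : #G * ‖S‖ ^ 2 ≤ ∑ x, r x * T x := by
    calc (#G : ℝ) * ‖S‖ ^ 2 = ‖(#G : ℂ) * S ^ 2‖ := by simp [norm_pow]
      _ ≤ ∑ x, r x * T x := by
        rw [card_mul_sq_sum_addChar h0 hmul]
        refine (norm_sum_le _ _).trans_eq ?_
        simp [r, T]
  have hr1 : ∑ x, r x = #G ^ 2 := by
    simp only [r]
    exact_mod_cast (Finset.sum_addConvolution G G).trans (sq _).symm
  have hr2 : ∑ x, r x ^ 2 = addEnergy G G := by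
    simp only [r]
    exact_mod_cast sum_addConvolution_self_sq G
  have hT4 : ∑ x, T x ^ 4 = Fintype.card F * addEnergy G G :=
    sum_norm_pow_four_sum_addChar_mul (AddChar.IsPrimitive.of_ne_one hψ) G
  have key : (#G : ℝ) ^ 4 * ‖S‖ ^ 8 ≤ (#G : ℝ) ^ 4 * (Fintype.card F * addEnergy G G ^ 2) :=
    calc (#G : ℝ) ^ 4 * ‖S‖ ^ 8 = (#G * ‖S‖ ^ 2) ^ 4 := by ring
      _ ≤ (∑ x, r x * T x) ^ 4 := by gcongr
      _ ≤ (∑ x, r x) ^ 2 * (∑ x, r x ^ 2) * ∑ x, T x ^ 4 :=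
        sum_mul_pow_four_le _ (fun x _ => Nat.cast_nonneg _) T
      _ = _ := by rw [hr1, hr2, hT4]; ring
  exact le_of_mul_le_mul_left key (pow_pos (Nat.cast_pos.2 hG.card_pos) 4)

theorem konyagin_character_sum_bound_general {F : Type*} [Field F] [Fintype F] [DecidableEq F]
    (G : Finset F) (h0 : (0 : F) ∉ G)
    (hmul : ∀ x ∈ G, ∀ y ∈ G, x * y ∈ G)
    (ψ : AddChar F ℂ) (hψ : ψ ≠ 1) :
    ‖∑ g ∈ G, ψ g‖ ≤
      (Fintype.card F : ℝ) ^ ((1 : ℝ) / 8) * (addEnergy G G : ℝ) ^ ((1 : ℝ) / 4) := by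
  refine le_of_pow_le_pow_left₀ (n := 8) (by norm_num) (by positivity) ?_
  rw [mul_pow, ← Real.rpow_natCast ((Fintype.card F : ℝ) ^ _),
    ← Real.rpow_natCast ((addEnergy G G : ℝ) ^ _), ← Real.rpow_mul (by positivity),
    ← Real.rpow_mul (by positivity)]
  norm_num
  exact norm_sum_addChar_pow_eight_le h0 hmul hψ

/-- Konyagin-type bound: for a multiplicative subgroup `G ≤ 𝔽_q^*` and a nontrivial
additive character `ψ`, `|∑_{g∈G} ψ(g)| ≤ q^{1/8} E(G)^{1/4}`. -/
theorem konyagin_character_sum_bound {F : Type*} [Field F] [Fintype F] [DecidableEq F]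
    (G : Finset F) (h0 : (0 : F) ∉ G) (h1 : (1 : F) ∈ G)
    (hmul : ∀ x ∈ G, ∀ y ∈ G, x * y ∈ G) (hinv : ∀ x ∈ G, x⁻¹ ∈ G)
    (ψ : AddChar F ℂ) (hψ : ψ ≠ 1) :
    ‖∑ g ∈ G, ψ g‖ ≤
      (Fintype.card F : ℝ) ^ ((1 : ℝ) / 8) * (addEnergy G G : ℝ) ^ ((1 : ℝ) / 4) :=
  konyagin_character_sum_bound_general G h0 hmul ψ hψ
end
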